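/- Let τ be an M-topology on M : X → ℕ and let A : X → ℕ be a sub-M-set of M. Then bd(bd(A)) ≤ bd(A) pointwise, i.e., bd(bd(A))(x) ≤ bd(A)(x) for every x ∈ X. -/

import Mathlib

/-- M-complement of a sub-M-set: `Aᶜ = M ⊖ A` (pointwise truncated subtraction). -/
def mcompl {X : Type*} (M A : X → ℕ) : X → ℕ := fun x => M x - A x

/-- `τ` is an M-topology on the multiset `M : X → ℕ`. -/
structure IsMTopology {X : Type*} (M : X → ℕ) (τ : Set (X → ℕ)) : Prop where
  le_of_mem : ∀ N ∈ τ, N ≤ M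
  top_mem : M ∈ τ
  zero_mem : (0 : X → ℕ) ∈ τ
  sSup_mem : ∀ S ⊆ τ, (fun x => sSup {n | ∃ N ∈ S, N x = n}) ∈ τ
  min_mem : ∀ U ∈ τ, ∀ V ∈ τ, (fun x => min (U x) (V x)) ∈ τ

/-- Interior: pointwise supremum of all open `G ∈ τ` with `G ≤ A`. -/
noncomputable def mint {X : Type*} (τ : Set (X → ℕ)) (A : X → ℕ) : X → ℕ :=
  fun x => sSup {n | ∃ G ∈ τ, G ≤ A ∧ G x = n}

/-- Closure: pointwise infimum of all closed `K` with `A ≤ K ≤ M`. -/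
noncomputable def mcl {X : Type*} (M : X → ℕ) (τ : Set (X → ℕ)) (A : X → ℕ) : X → ℕ :=
  fun x => sInf {n | ∃ K, mcompl M K ∈ τ ∧ A ≤ K ∧ K ≤ M ∧ K x = n}

/-- Exterior: interior of the M-complement. -/
noncomputable def mext {X : Type*} (M : X → ℕ) (τ : Set (X → ℕ)) (A : X → ℕ) : X → ℕ :=
  mint τ (mcompl M A)

/-- Boundary: `bd(A) = cl(A) ∩ cl(Aᶜ)` (pointwise min). -/
noncomputable def mbd {X : Type*} (M : X → ℕ) (τ : Set (X → ℕ)) (A : X → ℕ) : X → ℕ :=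
  fun x => min (mcl M τ A x) (mcl M τ (mcompl M A) x)

/-!
The boundary `cl A ∩ cl Aᶜ` is an intersection of two closed sub-M-sets, hence closed, and
the boundary of any set lies in its closure. So `bd (bd A) ≤ cl (bd A) ≤ bd A`.
-/

section

variable {X : Type*} {M : X → ℕ} {τ : Set (X → ℕ)}

theorem mcompl_le (A : X → ℕ) : mcompl M A ≤ M := fun x => Nat.sub_le (M x) (A x)

theorem mcompl_self : mcompl M M = 0 := funext fun x => Nat.sub_self (M x)

namespace IsMTopology

theorem mem_of_isGreatest (hτ : IsMTopology M τ) {S : Set (X → ℕ)} (hS : S ⊆ τ) {G : X → ℕ}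
    (hG : ∀ x, IsGreatest {n | ∃ N ∈ S, N x = n} (G x)) : G ∈ τ := by
  convert hτ.sSup_mem S hS using 1
  exact funext fun x => (hG x).csSup_eq.symm

theorem max_mem (hτ : IsMTopology M τ) {U V : X → ℕ} (hU : U ∈ τ) (hV : V ∈ τ) :
    (fun x => max (U x) (V x)) ∈ τ := by
  refine hτ.mem_of_isGreatest (S := {U, V}) (Set.pair_subset hU hV) fun x => ?_
  constructor
  · rcases le_total (U x) (V x) with h | h
    · exact ⟨V, Or.inr rfl, (max_eq_right h).symm⟩
    · exact ⟨U, Or.inl rfl, (max_eq_left h).symm⟩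
  · rintro _ ⟨N, rfl | rfl, rfl⟩
    exacts [le_max_left _ _, le_max_right _ _]

theorem mcompl_self_mem (hτ : IsMTopology M τ) : mcompl M M ∈ τ :=
  mcompl_self (M := M) ▸ hτ.zero_mem

end IsMTopology

theorem mcl_le_of_closed {A K : X → ℕ} (hK : mcompl M K ∈ τ) (hAK : A ≤ K) (hKM : K ≤ M) :
    mcl M τ A ≤ K := fun _ =>
  Nat.sInf_le ⟨K, hK, hAK, hKM, rfl⟩

theorem mcl_le (hτ : IsMTopology M τ) {A : X → ℕ} (hA : A ≤ M) : mcl M τ A ≤ M :=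
  mcl_le_of_closed hτ.mcompl_self_mem hA le_rfl

theorem exists_closed_apply_eq_mcl (hτ : IsMTopology M τ) {A : X → ℕ} (hA : A ≤ M) (x : X) :
    ∃ K, mcompl M K ∈ τ ∧ A ≤ K ∧ K ≤ M ∧ K x = mcl M τ A x :=
  Nat.sInf_mem (s := {n | ∃ K, mcompl M K ∈ τ ∧ A ≤ K ∧ K ≤ M ∧ K x = n})
    ⟨M x, M, hτ.mcompl_self_mem, hA, le_rfl, rfl⟩

/-- The infimum defining `cl A x` is attained in `ℕ`, so `M x - cl A x` is the largest value at `x`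
of the open complements of closed supersets of `A`. -/
theorem mcompl_mcl_mem (hτ : IsMTopology M τ) {A : X → ℕ} (hA : A ≤ M) :
    mcompl M (mcl M τ A) ∈ τ := by
  let S := {N | ∃ K, mcompl M K ∈ τ ∧ A ≤ K ∧ K ≤ M ∧ N = mcompl M K}
  have hS : S ⊆ τ := by
    rintro _ ⟨K, hK, -, -, rfl⟩
    exact hK
  refine hτ.mem_of_isGreatest hS fun x => ?_
  constructor
  · obtain ⟨K, hK, hAK, hKM, hKx⟩ := exists_closed_apply_eq_mcl hτ hA x
    exact ⟨mcompl M K, ⟨K, hK, hAK, hKM, rfl⟩, by simp only [mcompl, hKx]⟩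
  · rintro _ ⟨_, ⟨K, hK, hAK, hKM, rfl⟩, rfl⟩
    exact Nat.sub_le_sub_left (mcl_le_of_closed hK hAK hKM x) (M x)

theorem mcompl_mbd_mem (hτ : IsMTopology M τ) {A : X → ℕ} (hA : A ≤ M) :
    mcompl M (mbd M τ A) ∈ τ := by
  have h := hτ.max_mem (mcompl_mcl_mem hτ hA) (mcompl_mcl_mem hτ (mcompl_le A))
  convert h using 2 with x
  simp only [mcompl, mbd]
  omega

theorem mbd_le_mcl (A : X → ℕ) : mbd M τ A ≤ mcl M τ A := fun _ => min_le_left _ _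

end

theorem bd_bd_le_bd {X : Type*} (M : X → ℕ) (τ : Set (X → ℕ))
    (hτ : IsMTopology M τ) (A : X → ℕ) (hA : A ≤ M) :
    ∀ x, mbd M τ (mbd M τ A) x ≤ mbd M τ A x := by
  have hbd_le : mbd M τ A ≤ M := (mbd_le_mcl A).trans (mcl_le hτ hA)
  exact (mbd_le_mcl _).trans (mcl_le_of_closed (mcompl_mbd_mem hτ hA) le_rfl hbd_le)
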